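/- arXiv:1803.01445 — 2 statements merged into one kernel-verified Lean document; each statement's English description precedes it below -/
import Mathlib

section
/- Outer star-cylindrification correctly represents outer cylindrification: ⟦ċ_i(C)⟧ = c_i(⟦C⟧), where ċ_i replaces position i of each star-tuple by * and deletes all conditions involving i, and c_i is outer cylindrification of sets of tuples. -/
/-- Literals appearing in conditions of (extended) star-tuples:
equalities `i = j`, inequalities `i ≠ j`, `i ≠ a` (for a constant `a`),
and falsum. -/
inductive Lit (n : ℕ) (D : Type) : Type where
  | eq : Fin n → Fin n → Lit n D
  | ne : Fin n → Fin n → Lit n D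
  | neC : Fin n → D → Lit n D
  | fls : Lit n D

/-- Satisfaction of a literal by an ordinary tuple. -/
def satLit {n : ℕ} {D : Type} (s : Fin n → D) : Lit n D → Prop
  | .eq i j => s i = s j
  | .ne i j => s i ≠ s j
  | .neC i a => s i ≠ a
  | .fls => False

/-- Satisfaction of a condition (a set of literals). -/
def satCond {n : ℕ} {D : Type} (s : Fin n → D) (θ : Set (Lit n D)) : Prop :=
  ∀ ℓ ∈ θ, satLit s ℓ

/-- An `n`-ary star-tuple: values in `D ∪ {*}` (with `none` = *) together with a
condition (its "(n+1)st column"). -/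
abbrev StarTuple (n : ℕ) (D : Type) := (Fin n → Option D) × Set (Lit n D)

/-- An ordinary tuple `s ∈ D^n` is dominated by (represented by) a star-tuple `t`:
each value of `t` is `*` or the corresponding value of `s`, and `s` satisfies the
condition of `t`. -/
def repOrd {n : ℕ} {D : Type} (s : Fin n → D) (t : StarTuple n D) : Prop :=
  (∀ i, t.1 i = none ∨ t.1 i = some (s i)) ∧ satCond s t.2

/-- The set of ordinary tuples represented by a star-cylinder: `⟦C⟧`. -/
def sem {n : ℕ} {D : Type} (C : Set (StarTuple n D)) : Set (Fin n → D) :=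
  {s | ∃ t ∈ C, repOrd s t}

/-- A star-tuple is positive when its condition consists of equalities only. -/
def PositiveTuple {n : ℕ} {D : Type} (t : StarTuple n D) : Prop :=
  ∀ ℓ ∈ t.2, ∃ i j : Fin n, ℓ = Lit.eq i j

/-- Normal form: the condition is satisfiable, and whenever it entails `i = j`
it contains the literal `i = j` and positions `i` and `j` hold equal values. -/
def NormalForm {n : ℕ} {D : Type} (t : StarTuple n D) : Prop :=
  (∃ s : Fin n → D, satCond s t.2) ∧
    ∀ i j : Fin n, (∀ s : Fin n → D, satCond s t.2 → s i = s j) →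
      (Lit.eq i j ∈ t.2 ∧ t.1 i = t.1 j)

/-- Whether a literal mentions column `i`. -/
def mentions {n : ℕ} {D : Type} (i : Fin n) : Lit n D → Prop
  | .eq j k => i = j ∨ i = k
  | .ne j k => i = j ∨ i = k
  | .neC j _ => i = j
  | .fls => False

/-- Outer star-cylindrification of a star-tuple: position `i` becomes `*` and all
literals mentioning `i` are deleted from the condition. -/
def ocylT {n : ℕ} {D : Type} (i : Fin n) (t : StarTuple n D) : StarTuple n D :=
  (Function.update t.1 i none, {ℓ ∈ t.2 | ¬ mentions i ℓ})

/-!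
Removing column `i` from a star-tuple `t` loses exactly the literals that mention `i`, so
`⟦ċ_i(C)⟧ ⊇ c_i(⟦C⟧)` is immediate. Conversely, if `s` is represented by `ċ_i(t)`, we must find
a value `a` for column `i` such that `s(i/a)` is represented by `t`. Since `t` is positive, the
only literals involving `i` are equalities, and they force `a = s j` exactly for the columns `j`
whose equality with `i` the condition entails. By normal form, all such columns carry the same
value in `s` (their equality is itself a literal not mentioning `i`) and the same entry of `t` as
column `i`; if there is no such column, `a` can be read off `t` or chosen freely.
-/

open Function

section

variable {n : ℕ} {D : Type}

def EntailsEq (θ : Set (Lit n D)) (i j : Fin n) : Prop :=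
  ∀ s : Fin n → D, satCond s θ → s i = s j

theorem EntailsEq.symm {θ : Set (Lit n D)} {i j : Fin n} (h : EntailsEq θ i j) :
    EntailsEq θ j i :=
  fun s hs => (h s hs).symm

theorem EntailsEq.trans {θ : Set (Lit n D)} {i j k : Fin n} (hij : EntailsEq θ i j)
    (hjk : EntailsEq θ j k) : EntailsEq θ i k :=
  fun s hs => (hij s hs).trans (hjk s hs)

theorem entailsEq_of_mem {θ : Set (Lit n D)} {i j : Fin n} (h : Lit.eq i j ∈ θ) :
    EntailsEq θ i j :=
  fun _ hs => hs _ h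

theorem satLit_update_of_not_mentions {i : Fin n} {ℓ : Lit n D} (h : ¬ mentions i ℓ)
    (s : Fin n → D) (a : D) : satLit (update s i a) ℓ ↔ satLit s ℓ := by
  cases ℓ <;> simp_all [mentions, satLit, update_of_ne, eq_comm]

theorem repOrd_ocylT_iff {s : Fin n → D} {i : Fin n} {t : StarTuple n D} :
    repOrd s (ocylT i t) ↔
      (∀ j, j ≠ i → t.1 j = none ∨ t.1 j = some (s j)) ∧
        ∀ ℓ ∈ t.2, ¬ mentions i ℓ → satLit s ℓ := by
  refine and_congr ⟨fun h j hj => ?_, fun h j => ?_⟩ ⟨fun h ℓ hℓ hm => h ℓ ⟨hℓ, hm⟩,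
    fun h ℓ hℓ => h ℓ hℓ.1 hℓ.2⟩
  · simpa [ocylT, update_of_ne hj] using h j
  · by_cases hj : j = i
    · simp [ocylT, hj]
    · simpa [ocylT, update_of_ne hj] using h j hj

theorem repOrd_ocylT_of_repOrd_update {s : Fin n → D} {i : Fin n} {a : D} {t : StarTuple n D}
    (h : repOrd (update s i a) t) : repOrd s (ocylT i t) := by
  refine repOrd_ocylT_iff.2 ⟨fun j hj => ?_, fun ℓ hℓ hm => ?_⟩
  · simpa [update_of_ne hj] using h.1 j
  · exact (satLit_update_of_not_mentions hm s a).1 (h.2 ℓ hℓ)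

theorem repOrd_update_of_repOrd_ocylT {s : Fin n → D} {i : Fin n} {a : D} {t : StarTuple n D}
    (hpos : PositiveTuple t) (h : repOrd s (ocylT i t))
    (hi : t.1 i = none ∨ t.1 i = some a) (ha : ∀ j, j ≠ i → EntailsEq t.2 i j → a = s j) :
    repOrd (update s i a) t := by
  obtain ⟨hval, hcond⟩ := repOrd_ocylT_iff.1 h
  refine ⟨fun k => ?_, fun ℓ hℓ => ?_⟩
  · by_cases hk : k = i
    · subst hk
      simpa using hi
    · simpa [update_of_ne hk] using hval k hk
  obtain ⟨p, q, rfl⟩ := hpos ℓ hℓ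
  have hpq := entailsEq_of_mem hℓ
  show update s i a p = update s i a q
  by_cases hp : p = i <;> by_cases hq : q = i
  · rw [hp, hq]
  · subst hp
    rw [update_self, update_of_ne hq, ha q hq hpq]
  · subst hq
    rw [update_self, update_of_ne hp, ha p hp hpq.symm]
  · have hm : ¬ mentions i (Lit.eq p q : Lit n D) := by simp [mentions, Ne.symm hp, Ne.symm hq]
    exact (satLit_update_of_not_mentions hm s a).2 (hcond _ hℓ hm)

theorem exists_repOrd_update_of_repOrd_ocylT {s : Fin n → D} {i : Fin n} {t : StarTuple n D}
    (hpos : PositiveTuple t) (hnf : NormalForm t) (h : repOrd s (ocylT i t)) :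
    ∃ a, repOrd (update s i a) t := by
  by_cases hent : ∃ j, j ≠ i ∧ EntailsEq t.2 i j
  · obtain ⟨j, hji, hij⟩ := hent
    refine ⟨s j, repOrd_update_of_repOrd_ocylT hpos h ?_ fun k hki hik => ?_⟩
    · rw [(hnf.2 i j hij).2]
      exact (repOrd_ocylT_iff.1 h).1 j hji
    · have hjk := (hnf.2 j k (hij.symm.trans hik)).1
      exact (repOrd_ocylT_iff.1 h).2 _ hjk (by simp [mentions, Ne.symm hji, Ne.symm hki])
  · simp only [not_exists, not_and] at hent
    refine ⟨(t.1 i).getD (s i), repOrd_update_of_repOrd_ocylT hpos h ?_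
      fun j hji hij => absurd hij (hent j hji)⟩
    cases t.1 i <;> simp

end

theorem sem_ocyl_general (D : Type) (n : ℕ)
    (C : Set (StarTuple n D))
    (hCpos : ∀ t ∈ C, PositiveTuple t) (hCnf : ∀ t ∈ C, NormalForm t)
    (i : Fin n) :
    sem (ocylT i '' C) = {s : Fin n → D | ∃ a : D, Function.update s i a ∈ sem C} := by
  ext s
  constructor
  · rintro ⟨_, ⟨t, htC, rfl⟩, hs⟩
    obtain ⟨a, ha⟩ := exists_repOrd_update_of_repOrd_ocylT (hCpos t htC) (hCnf t htC) hs
    exact ⟨a, t, htC, ha⟩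
  · rintro ⟨a, t, htC, ht⟩
    exact ⟨_, ⟨t, htC, rfl⟩, repOrd_ocylT_of_repOrd_update ht⟩

/-- Outer star-cylindrification correctly represents outer
cylindrification: ⟦ċ_i(C)⟧ = c_i(⟦C⟧). -/
theorem sem_ocyl (D : Type) [Countable D] [Infinite D] (n : ℕ)
    (C : Set (StarTuple n D)) (hCfin : C.Finite)
    (hCpos : ∀ t ∈ C, PositiveTuple t) (hCnf : ∀ t ∈ C, NormalForm t)
    (i : Fin n) :
    sem (ocylT i '' C) = {s : Fin n → D | ∃ a : D, Function.update s i a ∈ sem C} :=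
  sem_ocyl_general D n C hCpos hCnf i
end

section
/- Naive evaluation computes certain answers for positive cylindric algebra expressions: for any sequence C of n-dimensional naive cylinders and diagonals and any positive expression E, the set of all-constant tuples of E(C) equals the intersection of E(D) over all D ∈ Rep(C), where Rep(C) = {D : C →_h D for some possible-world homomorphism h}. -/
/-- A sequence of `m` naive `n`-dimensional cylinders (together with their
diagonals, determined by the universe): the universe satisfies
D ⊆ univ ⊆ D ∪ N (constants `D`, existential nulls `N`), and each cylinder is a
set of `n`-tuples over the universe. -/
structure NaiveSeq (D N : Type) (m n : ℕ) where
  carrier : Set (D ⊕ N)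
  const_mem : ∀ d : D, Sum.inl d ∈ carrier
  rel : Fin m → Set (Fin n → D ⊕ N)
  rel_mem : ∀ p, ∀ t ∈ rel p, ∀ i, t i ∈ carrier

/-- Positive cylindric set algebra expressions: atomic cylinders, diagonals,
union, intersection, outer and inner cylindrification (no complement). -/
inductive PExpr (m n : ℕ) : Type where
  | base (p : Fin m)
  | diag (i j : Fin n)
  | union (E F : PExpr m n)
  | inter (E F : PExpr m n)
  | cyl (i : Fin n) (E : PExpr m n)
  | icyl (i : Fin n) (E : PExpr m n)

/-- Evaluation of a positive expression on a sequence of naive cylinders,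
relativized to the universe of the sequence. -/
def evalP {D N : Type} {m n : ℕ} (S : NaiveSeq D N m n) :
    PExpr m n → Set (Fin n → D ⊕ N)
  | .base p => S.rel p
  | .diag i j => {t | (∀ k, t k ∈ S.carrier) ∧ t i = t j}
  | .union E F => evalP S E ∪ evalP S F
  | .inter E F => evalP S E ∩ evalP S F
  | .cyl i E => {t | (∀ k, t k ∈ S.carrier) ∧
      ∃ x ∈ S.carrier, Function.update t i x ∈ evalP S E}
  | .icyl i E => {t | (∀ k, t k ∈ S.carrier) ∧
      ∀ x ∈ S.carrier, Function.update t i x ∈ evalP S E}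

/-- A possible-world homomorphism: a map on D ∪ N that is the identity on the
constants D. -/
def IsPWHom {D N : Type} (h : D ⊕ N → D ⊕ N) : Prop :=
  ∀ d : D, h (Sum.inl d) = Sum.inl d

/-- `C →_h D`: `h` maps the universe of `C` onto the universe of `D` (hence the
diagonal of `C` onto the diagonal of `D`) and each cylinder of `C` into the
corresponding cylinder of `D`. -/
def HomTo {D N : Type} {m n : ℕ} (h : D ⊕ N → D ⊕ N)
    (S T : NaiveSeq D N m n) : Prop :=
  h '' S.carrier = T.carrier ∧ ∀ p, (fun t => h ∘ t) '' S.rel p ⊆ T.rel p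

/-- `Rep(C)`: the naive sequences reachable from `C` by a possible-world
homomorphism. -/
def RepN {D N : Type} {m n : ℕ} (S : NaiveSeq D N m n) :
    Set (NaiveSeq D N m n) :=
  {T | ∃ h : D ⊕ N → D ⊕ N, IsPWHom h ∧ HomTo h S T}

/-!
A possible-world homomorphism fixes constants and, by induction on the expression, carries
`E(C)` into `E(D)` for every `D ∈ Rep(C)` (inner cylindrification uses that the universe of `C`
maps *onto* that of `D`); so an all-constant tuple of `E(C)` is a certain answer. Conversely,
`C ∈ Rep(C)` via the identity, and sending every null to one fixed constant gives a world in
`Rep(C)` without nulls, so a certain answer is an all-constant tuple of `E(C)`.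
-/

section

variable {D N : Type} {m n : ℕ}

theorem evalP_subset_carrier (S : NaiveSeq D N m n) (E : PExpr m n) :
    evalP S E ⊆ {t | ∀ i, t i ∈ S.carrier} := by
  induction E with
  | base p => exact fun t ht => S.rel_mem p t ht
  | diag | cyl | icyl => exact fun t ht => ht.1
  | union E F ihE ihF => exact Set.union_subset ihE ihF
  | inter E F ihE _ => exact Set.inter_subset_left.trans ihE

theorem IsPWHom.comp_eq_self {h : D ⊕ N → D ⊕ N} (hh : IsPWHom h) {t : Fin n → D ⊕ N}
    (ht : ∀ i, ∃ d : D, t i = Sum.inl d) : h ∘ t = t := by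
  funext i
  obtain ⟨d, hd⟩ := ht i
  rw [Function.comp_apply, hd, hh]

namespace HomTo

variable {h : D ⊕ N → D ⊕ N} {S T : NaiveSeq D N m n}

theorem mapsTo_carrier (hST : HomTo h S T) : Set.MapsTo h S.carrier T.carrier :=
  hST.1 ▸ Set.mapsTo_image h S.carrier

theorem comp_mem_evalP (hST : HomTo h S T) {E : PExpr m n} {t : Fin n → D ⊕ N}
    (ht : t ∈ evalP S E) : h ∘ t ∈ evalP T E := by
  have hmaps := hST.mapsTo_carrier
  induction E generalizing t with
  | base p => exact hST.2 p ⟨t, ht, rfl⟩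
  | diag i j =>
    obtain ⟨hc, hij⟩ := ht
    exact ⟨fun k => hmaps (hc k), by simp only [Function.comp_apply, hij]⟩
  | union E F ihE ihF => exact ht.imp ihE ihF
  | inter E F ihE ihF => exact ⟨ihE ht.1, ihF ht.2⟩
  | cyl i E ih =>
    obtain ⟨hc, x, hx, hup⟩ := ht
    refine ⟨fun k => hmaps (hc k), h x, hmaps hx, ?_⟩
    rw [← Function.comp_update]
    exact ih hup
  | icyl i E ih =>
    obtain ⟨hc, hall⟩ := ht
    refine ⟨fun k => hmaps (hc k), ?_⟩
    rw [← hST.1]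
    rintro _ ⟨x, hx, rfl⟩
    rw [← Function.comp_update]
    exact ih (hall x hx)

end HomTo

namespace NaiveSeq

def map (S : NaiveSeq D N m n) (h : D ⊕ N → D ⊕ N) (hh : IsPWHom h) : NaiveSeq D N m n where
  carrier := h '' S.carrier
  const_mem d := ⟨Sum.inl d, S.const_mem d, hh d⟩
  rel p := (h ∘ ·) '' S.rel p
  rel_mem := by
    rintro p _ ⟨t, ht, rfl⟩ i
    exact Set.mem_image_of_mem h (S.rel_mem p t ht i)

theorem map_mem_repN (S : NaiveSeq D N m n) {h : D ⊕ N → D ⊕ N} (hh : IsPWHom h) :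
    S.map h hh ∈ RepN S :=
  ⟨h, hh, rfl, fun _ => subset_rfl⟩

theorem self_mem_repN (S : NaiveSeq D N m n) : S ∈ RepN S :=
  ⟨id, fun _ => rfl, Set.image_id _, fun _ => (Set.image_id _).subset⟩

end NaiveSeq

def groundNulls (d₀ : D) : D ⊕ N → D ⊕ N :=
  Sum.elim Sum.inl fun _ => Sum.inl d₀

theorem isPWHom_groundNulls (d₀ : D) : IsPWHom (groundNulls (N := N) d₀) :=
  fun _ => rfl

theorem exists_groundNulls_eq_inl (d₀ : D) (x : D ⊕ N) :
    ∃ d : D, groundNulls d₀ x = Sum.inl d := by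
  cases x with
  | inl d => exact ⟨d, rfl⟩
  | inr _ => exact ⟨d₀, rfl⟩

end

theorem naive_certain_answers_general (D N : Type) [Infinite D] (m n : ℕ)
    (S : NaiveSeq D N m n) (E : PExpr m n) :
    evalP S E ∩ {t | ∀ i, ∃ d : D, t i = Sum.inl d}
      = ⋂ T ∈ RepN S, evalP T E := by
  ext t
  simp only [Set.mem_inter_iff, Set.mem_ofPred_eq, Set.mem_iInter]
  constructor
  · rintro ⟨htE, hconst⟩ T ⟨h, hh, hST⟩
    simpa only [hh.comp_eq_self hconst] using hST.comp_mem_evalP htE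
  · intro hcertain
    obtain ⟨d₀⟩ := (inferInstance : Nonempty D)
    have hground := hcertain _ (S.map_mem_repN (isPWHom_groundNulls d₀))
    refine ⟨hcertain S S.self_mem_repN, fun i => ?_⟩
    obtain ⟨x, -, hx⟩ := evalP_subset_carrier _ E hground i
    exact hx ▸ exists_groundNulls_eq_inl d₀ x

/-- Naive evaluation computes certain answers for positive
expressions: the all-constant tuples of E(C) are exactly the tuples belonging to
E(D) for every D ∈ Rep(C). -/
theorem naive_certain_answers (D N : Type) [Countable D] [Infinite D]
    [Countable N] [Infinite N] (m n : ℕ)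
    (S : NaiveSeq D N m n) (E : PExpr m n) :
    evalP S E ∩ {t | ∀ i, ∃ d : D, t i = Sum.inl d}
      = ⋂ T ∈ RepN S, evalP T E :=
  naive_certain_answers_general D N m n S E
end
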